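/- Let n ≥ 1 and let μ be the Haar probability measure on SO(n). Then for every x = (x₁,…,xₙ) ∈ ℝⁿ and every pair of distinct indices i ≠ j: ∫_{SO(n)} ( x_j·y_{ji} − x_i·y_{ij} ) · exp(Σ_{k=1}^n x_k y_{kk}) dμ(y) = 0, and ∫_{SO(n)} ( x_j·y_{ij} − x_i·y_{ji} ) · exp(Σ_{k=1}^n x_k y_{kk}) dμ(y) = 0, where y_{ab} denotes the (a,b) entry of the matrix y. -/

import Mathlib

/-!
Left translation by the rotation `R t` of the `(i, j)`-plane preserves `μ`, so
`t ↦ ∫ exp (∑ₖ xₖ (R t * y)ₖₖ) dμ` is constant. Since `SO(n)` is compact we may differentiate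
under the integral sign; the derivative at `t = 0` is the second integral, which therefore
vanishes. The first integral is the second one after the substitution `y ↦ yᵀ`, and this
substitution preserves `μ`: a left-invariant and a right-invariant probability measure carried by
`SO(n)` coincide, by computing the measure of `{(z, y) | z * y ∈ s}` with Fubini in both orders.
-/

open MeasureTheory Matrix

attribute [local instance] Matrix.normedAddCommGroup Matrix.normedSpace

noncomputable instance matrixMeasurableSpace (n : ℕ) :
    MeasurableSpace (Matrix (Fin n) (Fin n) ℝ) := borel _

/-- The special orthogonal group `SO(n)`, viewed as a subset of the space of
`n × n` real matrices. -/
def SO (n : ℕ) : Set (Matrix (Fin n) (Fin n) ℝ) :=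
  {y | yᵀ * y = 1 ∧ y.det = 1}

/-- `μ` is the Haar probability measure of `SO(n)`, viewed as a measure on the space of
`n × n` real matrices: it is a probability measure carried by `SO(n)` which is invariant
under left translation by elements of `SO(n)`. -/
structure IsHaarSO (n : ℕ) (μ : Measure (Matrix (Fin n) (Fin n) ℝ)) : Prop where
  isProbabilityMeasure : IsProbabilityMeasure μ
  ae_mem : ∀ᵐ y ∂μ, y ∈ SO n
  left_invariant : ∀ a ∈ SO n, Measure.map (fun y => a * y) μ = μ

/-- The Fisher integral `f(x) = ∫_{SO(n)} exp(tr(x·y)) dμ(y)`, where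
`tr(x·y) = Σᵢⱼ xᵢⱼ yᵢⱼ`. -/
noncomputable def fisher (n : ℕ) (μ : Measure (Matrix (Fin n) (Fin n) ℝ))
    (x : Matrix (Fin n) (Fin n) ℝ) : ℝ :=
  ∫ y, Real.exp (∑ i, ∑ j, x i j * y i j) ∂μ

/-- The partial derivative operator `∂/∂x_{a b}` in the `(a,b)` matrix-entry coordinate. -/
noncomputable def pd {n : ℕ} (a b : Fin n) (g : Matrix (Fin n) (Fin n) ℝ → ℝ) :
    Matrix (Fin n) (Fin n) ℝ → ℝ :=
  fun x => fderiv ℝ g x (Matrix.single a b 1)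

open Real

instance Matrix.secondCountableTopology {m n R : Type*} [Fintype m] [Fintype n]
    [TopologicalSpace R] [SecondCountableTopology R] :
    SecondCountableTopology (Matrix m n R) :=
  inferInstanceAs (SecondCountableTopology (m → n → R))

instance matrixBorelSpace (n : ℕ) : BorelSpace (Matrix (Fin n) (Fin n) ℝ) := ⟨rfl⟩

theorem MeasureTheory.Measure.eq_of_map_mul_left_of_map_mul_right
    {M : Type*} [Mul M] [MeasurableSpace M] [MeasurableMul₂ M] {G : Set M}
    {μ ν : Measure M} [IsProbabilityMeasure μ] [IsProbabilityMeasure ν]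
    (hμG : ∀ᵐ x ∂μ, x ∈ G) (hνG : ∀ᵐ x ∂ν, x ∈ G)
    (hμ : ∀ a ∈ G, μ.map (a * ·) = μ) (hν : ∀ a ∈ G, ν.map (· * a) = ν) : μ = ν := by
  ext s hs
  have hmul : MeasurableSet {p : M × M | p.1 * p.2 ∈ s} := measurable_mul hs
  calc μ s = ∫⁻ _, μ s ∂ν := by simp
    _ = ∫⁻ z, μ ((z * ·) ⁻¹' s) ∂ν := by
        refine lintegral_congr_ae ?_
        filter_upwards [hνG] with z hz
        rw [← Measure.map_apply (measurable_const_mul z) hs, hμ z hz]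
    _ = ν.prod μ {p | p.1 * p.2 ∈ s} := (Measure.prod_apply hmul).symm
    _ = ∫⁻ y, ν ((· * y) ⁻¹' s) ∂μ := Measure.prod_apply_symm hmul
    _ = ∫⁻ _, ν s ∂μ := by
        refine lintegral_congr_ae ?_
        filter_upwards [hμG] with y hy
        rw [← Measure.map_apply (measurable_mul_const y) hs, hν y hy]
    _ = ν s := by simp

theorem hasDerivAt_integral_of_continuous_of_ae_mem_isCompact
    {α : Type*} [TopologicalSpace α] [MeasurableSpace α] [OpensMeasurableSpace α]
    {κ : Measure α} [IsFiniteMeasure κ] {K : Set α} (hK : IsCompact K) (hκK : ∀ᵐ a ∂κ, a ∈ K)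
    {F F' : ℝ → α → ℝ} (hF : Continuous F.uncurry) (hF' : Continuous F'.uncurry)
    (hderiv : ∀ t a, HasDerivAt (F · a) (F' t a) t) (t₀ : ℝ) :
    HasDerivAt (fun t ↦ ∫ a, F t a ∂κ) (∫ a, F' t₀ a ∂κ) t₀ := by
  have hFt : ∀ t, Continuous (F t) := fun t ↦ hF.comp (Continuous.prodMk_right t)
  obtain ⟨C, hC⟩ := hK.exists_bound_of_continuousOn (hFt t₀).continuousOn
  obtain ⟨C', hC'⟩ := ((isCompact_closedBall t₀ 1).prod hK).exists_bound_of_continuousOn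
    hF'.continuousOn
  refine (hasDerivAt_integral_of_dominated_loc_of_deriv_le (bound := fun _ ↦ C')
    (Metric.closedBall_mem_nhds t₀ one_pos) (.of_forall fun t ↦ (hFt t).aestronglyMeasurable)
    (.of_bound (hFt t₀).aestronglyMeasurable C ?_)
    (hF'.comp (Continuous.prodMk_right t₀)).aestronglyMeasurable ?_ (integrable_const C')
    (.of_forall fun a t _ ↦ hderiv t a)).2
  · filter_upwards [hκK] with a ha using hC a ha
  · filter_upwards [hκK] with a ha t ht using hC' (t, a) ⟨ht, ha⟩

theorem hasDerivAt_exp_add_cos_sub_one_mul_add_sin_mul (S A B t : ℝ) :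
    HasDerivAt (fun t ↦ exp (S + ((cos t - 1) * A + sin t * B)))
      (exp (S + ((cos t - 1) * A + sin t * B)) * (-sin t * A + cos t * B)) t :=
  ((((hasDerivAt_cos t).sub_const 1).mul_const A).add ((hasDerivAt_sin t).mul_const B)).const_add
    S |>.exp

-- `P` behaves as the projection onto a plane and `Q` as the quarter turn in that plane.
theorem one_add_cos_sub_one_smul_add_sin_smul_mul {A : Type*} [Ring A] [Algebra ℝ A] {P Q : A}
    (hPP : P * P = P) (hPQ : P * Q = Q) (hQP : Q * P = Q) (hQQ : Q * Q = -P) (s t : ℝ) :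
    (1 + (cos s - 1) • P + sin s • Q) * (1 + (cos t - 1) • P + sin t • Q)
      = 1 + (cos (s + t) - 1) • P + sin (s + t) • Q := by
  simp only [add_mul, mul_add, one_mul, mul_one, smul_mul_smul_comm, hPP, hPQ, hQP, hQQ,
    cos_add, sin_add, smul_neg]
  module

section PlaneRotation

variable {m : Type*} [DecidableEq m]

noncomputable def planeRotation (i j : m) (t : ℝ) : Matrix m m ℝ :=
  1 + (cos t - 1) • (single i i 1 + single j j 1) + sin t • (single j i 1 - single i j 1)

theorem planeRotation_zero (i j : m) : planeRotation i j 0 = 1 := by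
  simp [planeRotation]

theorem transpose_planeRotation (i j : m) (t : ℝ) :
    (planeRotation i j t)ᵀ = planeRotation i j (-t) := by
  simp only [planeRotation, transpose_add, transpose_smul, transpose_one, transpose_sub,
    transpose_single, cos_neg, sin_neg]
  module

variable [Fintype m]

theorem planeRotation_mul_planeRotation {i j : m} (hij : i ≠ j) (s t : ℝ) :
    planeRotation i j s * planeRotation i j t = planeRotation i j (s + t) := by
  apply one_add_cos_sub_one_smul_add_sin_smul_mul <;>
    simp [add_mul, mul_add, sub_mul, mul_sub, hij, hij.symm] <;> abel

theorem sum_mul_single_mul_apply_diag (x : m → ℝ) (a b : m) (c : ℝ) (y : Matrix m m ℝ) :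
    ∑ k, x k * (single a b c * y) k k = x a * (c * y b a) := by
  rw [Fintype.sum_eq_single a fun k hk ↦ by rw [single_mul_apply_of_ne _ _ _ _ _ hk, mul_zero],
    single_mul_apply_same]

theorem sum_mul_planeRotation_mul_apply_diag (i j : m) (x : m → ℝ) (t : ℝ)
    (y : Matrix m m ℝ) :
    ∑ k, x k * (planeRotation i j t * y) k k = ∑ k, x k * y k k
      + (cos t - 1) * (x i * y i i + x j * y j j) + sin t * (x j * y i j - x i * y j i) := by
  simp only [planeRotation, add_mul, sub_mul, one_mul, smul_add, smul_sub, Matrix.add_apply,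
    Matrix.sub_apply, smul_single, smul_eq_mul, mul_one, mul_add, mul_sub,
    Finset.sum_add_distrib, Finset.sum_sub_distrib, sum_mul_single_mul_apply_diag]
  ring

end PlaneRotation

variable {n : ℕ}

theorem SO_eq_specialOrthogonalGroup :
    SO n = Matrix.specialOrthogonalGroup (Fin n) ℝ := by
  ext y
  rw [SetLike.mem_coe, mem_specialOrthogonalGroup_iff, mem_orthogonalGroup_iff']
  rfl

theorem transpose_mem_SO {y : Matrix (Fin n) (Fin n) ℝ} (hy : y ∈ SO n) : yᵀ ∈ SO n := by
  rw [SO_eq_specialOrthogonalGroup] at hy ⊢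
  exact (star (⟨y, hy⟩ : specialOrthogonalGroup (Fin n) ℝ)).2

theorem isCompact_SO : IsCompact (SO n) := by
  refine Metric.isCompact_of_isClosed_isBounded ?_ ?_
  · exact (isClosed_eq (by fun_prop) continuous_const).inter
      (isClosed_eq (by fun_prop) continuous_const)
  · refine (Metric.isBounded_iff_subset_closedBall 0).2 ⟨1, fun y hy ↦ ?_⟩
    rw [SO_eq_specialOrthogonalGroup] at hy
    rw [mem_closedBall_zero_iff, norm_le_iff zero_le_one]
    exact entry_norm_bound_of_unitary hy.1

theorem planeRotation_mem_SO {i j : Fin n} (hij : i ≠ j) (t : ℝ) :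
    planeRotation i j t ∈ SO n := by
  have horth : ∀ s, (planeRotation i j s)ᵀ * planeRotation i j s = 1 := fun s ↦ by
    rw [transpose_planeRotation, planeRotation_mul_planeRotation hij, neg_add_cancel,
      planeRotation_zero]
  refine ⟨horth t, ?_⟩
  have hsq : (planeRotation i j t).det * (planeRotation i j t).det = 1 := by
    simpa [det_transpose] using congrArg det (horth t)
  -- a rotation is the square of the rotation by half the angle
  have hnonneg : 0 ≤ (planeRotation i j t).det := by
    rw [← add_halves t, ← planeRotation_mul_planeRotation hij, det_mul]
    exact mul_self_nonneg _
  nlinarith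

namespace IsHaarSO

variable {μ : Measure (Matrix (Fin n) (Fin n) ℝ)}

theorem map_transpose (hμ : IsHaarSO n μ) : μ.map transpose = μ := by
  have := hμ.isProbabilityMeasure
  have htr : Measurable (transpose : Matrix (Fin n) (Fin n) ℝ → _) := by fun_prop
  have := Measure.isProbabilityMeasure_map (μ := μ) htr.aemeasurable
  refine (Measure.eq_of_map_mul_left_of_map_mul_right hμ.ae_mem ?_ hμ.left_invariant ?_).symm
  · exact (ae_map_iff htr.aemeasurable isCompact_SO.isClosed.measurableSet).2
      (hμ.ae_mem.mono fun y ↦ transpose_mem_SO)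
  · intro a ha
    have hcomm : (· * a) ∘ transpose = transpose ∘ (aᵀ * ·) := by
      funext y; simp [transpose_mul]
    rw [Measure.map_map (measurable_mul_const a) htr, hcomm,
      ← Measure.map_map htr (measurable_const_mul aᵀ), hμ.left_invariant aᵀ (transpose_mem_SO ha)]

theorem integral_comp_transpose (hμ : IsHaarSO n μ) (f : Matrix (Fin n) (Fin n) ℝ → ℝ) :
    ∫ y, f yᵀ ∂μ = ∫ y, f y ∂μ := by
  conv_rhs => rw [← hμ.map_transpose]
  exact ((MeasurableEquiv.ofInvolutive _ transpose_transpose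
    (by fun_prop)).measurableEmbedding.integral_map f).symm

theorem integral_sub_mul_exp_eq_zero (hμ : IsHaarSO n μ) (x : Fin n → ℝ) {i j : Fin n}
    (hij : i ≠ j) :
    ∫ y, (x j * y i j - x i * y j i) * exp (∑ k, x k * y k k) ∂μ = 0 := by
  have := hμ.isProbabilityMeasure
  have hconst : (fun t ↦ ∫ y, exp (∑ k, x k * (planeRotation i j t * y) k k) ∂μ)
      = fun _ ↦ ∫ y, exp (∑ k, x k * y k k) ∂μ := by
    funext t
    conv_rhs => rw [← hμ.left_invariant _ (planeRotation_mem_SO hij t)]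
    exact (integral_map (measurable_const_mul _).aemeasurable
      (by fun_prop : Continuous fun y : Matrix (Fin n) (Fin n) ℝ ↦
        exp (∑ k, x k * y k k)).aestronglyMeasurable).symm
  have hderiv : HasDerivAt (fun t ↦ ∫ y, exp (∑ k, x k * (planeRotation i j t * y) k k) ∂μ)
      (∫ y, (x j * y i j - x i * y j i) * exp (∑ k, x k * y k k) ∂μ) 0 := by
    simp_rw [sum_mul_planeRotation_mul_apply_diag, add_assoc]
    convert hasDerivAt_integral_of_continuous_of_ae_mem_isCompact isCompact_SO hμ.ae_mem
      (by fun_prop) (by fun_prop) (fun t y ↦ hasDerivAt_exp_add_cos_sub_one_mul_add_sin_mul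
        (∑ k, x k * y k k) (x i * y i i + x j * y j j) (x j * y i j - x i * y j i) t) 0 using 3
    simp [mul_comm]
  rw [hconst] at hderiv
  exact hderiv.unique (hasDerivAt_const 0 _)

end IsHaarSO

theorem integral_rotational_operators_diagonal_case_general (n : ℕ)
    (μ : Measure (Matrix (Fin n) (Fin n) ℝ)) (hμ : IsHaarSO n μ)
    (x : Fin n → ℝ) (i j : Fin n) (hij : i ≠ j) :
    (∫ y, (x j * y j i - x i * y i j) * Real.exp (∑ k, x k * y k k) ∂μ) = 0 ∧
    (∫ y, (x j * y i j - x i * y j i) * Real.exp (∑ k, x k * y k k) ∂μ) = 0 := by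
  refine ⟨?_, hμ.integral_sub_mul_exp_eq_zero x hij⟩
  rw [← hμ.integral_comp_transpose]
  simpa only [transpose_apply] using hμ.integral_sub_mul_exp_eq_zero x hij

theorem integral_rotational_operators_diagonal_case (n : ℕ) (hn : 1 ≤ n)
    (μ : Measure (Matrix (Fin n) (Fin n) ℝ)) (hμ : IsHaarSO n μ)
    (x : Fin n → ℝ) (i j : Fin n) (hij : i ≠ j) :
    (∫ y, (x j * y j i - x i * y i j) * Real.exp (∑ k, x k * y k k) ∂μ) = 0 ∧
    (∫ y, (x j * y i j - x i * y j i) * Real.exp (∑ k, x k * y k k) ∂μ) = 0 :=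
  integral_rotational_operators_diagonal_case_general n μ hμ x i j hij
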